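/- Let A be a Hermitian positive definite N×N matrix and h ∈ ℂ^N. For positive reals ρ, ε_u, ε_v, ξ with ε_u ≤ 1, define γ = ρ ε_u ε_v ξ² · h^H (A + ρ(1-ε_u) ε_v ξ² h h^H)^{-1} h. Then γ = (ρ ε_u ε_v ξ² t)/(1 + ρ(1-ε_u) ε_v ξ² t) where t = h^H A^{-1} h, and consequently γ < ε_u/(1-ε_u) whenever ε_u < 1. -/

import Mathlib

/-!
By Sherman–Morrison, `x = (1 + c t)⁻¹ • A⁻¹ h` solves `(A + c h hᴴ) x = h`, which gives the
closed form `γ = k t / (1 + c t)` with `k = ρ ε_u ε_v ξ²` and `c = ρ (1 - ε_u) ε_v ξ²`.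
As `t = hᴴ A⁻¹ h ≥ 0`, this is strictly below its supremum `k / c = ε_u / (1 - ε_u)`.
-/

open Matrix
open scoped ComplexOrder

namespace Matrix

variable {n K : Type*} [Fintype n] [DecidableEq n] [Field K]

theorem det_add_vecMulVec {A : Matrix n n K} (hA : IsUnit A.det) (u v : n → K) :
    (A + vecMulVec u v).det = A.det * (1 + v ⬝ᵥ A⁻¹ *ᵥ u) := by
  rw [vecMulVec_eq Unit, det_add_replicateCol_mul_replicateRow hA, det_unique (n := Unit),
    add_apply, one_apply_eq, Matrix.mul_assoc, ← replicateCol_mulVec,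
    replicateRow_mul_replicateCol_apply]

theorem inv_add_smul_vecMulVec_mulVec {A : Matrix n n K} (hA : IsUnit A.det) (c : K)
    (u v : n → K) (hd : 1 + c * (v ⬝ᵥ A⁻¹ *ᵥ u) ≠ 0) :
    (A + c • vecMulVec u v)⁻¹ *ᵥ u = (1 + c * (v ⬝ᵥ A⁻¹ *ᵥ u))⁻¹ • (A⁻¹ *ᵥ u) := by
  set M := A + c • vecMulVec u v with hM_def
  set d := 1 + c * (v ⬝ᵥ A⁻¹ *ᵥ u)
  have hM : IsUnit M.det := by
    rw [hM_def, ← smul_vecMulVec, det_add_vecMulVec hA, mulVec_smul, dotProduct_smul, smul_eq_mul]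
    exact hA.mul (isUnit_iff_ne_zero.2 hd)
  have hsolve : M *ᵥ (d⁻¹ • (A⁻¹ *ᵥ u)) = u := by
    rw [hM_def, mulVec_smul, add_mulVec, smul_mulVec, vecMulVec_mulVec, mulVec_mulVec,
      mul_nonsing_inv A hA, one_mulVec, op_smul_eq_smul, smul_smul]
    nth_rw 1 [← one_smul K u]
    rw [← add_smul, smul_smul, inv_mul_cancel₀ hd, one_smul]
  calc M⁻¹ *ᵥ u = M⁻¹ *ᵥ (M *ᵥ (d⁻¹ • (A⁻¹ *ᵥ u))) := by rw [hsolve]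
    _ = d⁻¹ • (A⁻¹ *ᵥ u) := by rw [mulVec_mulVec, nonsing_inv_mul _ hM, one_mulVec]

end Matrix

theorem mul_div_one_add_mul_lt_div {k c t : ℝ} (hk : 0 < k) (hc : 0 < c) (ht : 0 ≤ t) :
    k * t / (1 + c * t) < k / c := by
  rw [div_lt_div_iff₀ (by positivity) hc]
  nlinarith

/-- SINR saturation: for A Hermitian positive definite, h ∈ ℂ^N, positive reals
ρ, ε_u, ε_v, ξ with ε_u ≤ 1, the quantity
γ = ρ ε_u ε_v ξ² h^H (A + ρ(1-ε_u)ε_v ξ² h h^H)⁻¹ h satisfies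
γ = ρ ε_u ε_v ξ² t / (1 + ρ(1-ε_u)ε_v ξ² t) with t = h^H A⁻¹ h, and
γ < ε_u/(1-ε_u) when ε_u < 1. -/
theorem stmt10 (N : ℕ) (A : Matrix (Fin N) (Fin N) ℂ) (h : Fin N → ℂ)
    (ρ εu εv ξ : ℝ) (hρ : 0 < ρ) (hεu : 0 < εu) (hεu1 : εu ≤ 1) (hεv : 0 < εv)
    (hξ : 0 < ξ) (hA : A.PosDef) :
    (((ρ * εu * εv * ξ ^ 2 : ℝ) : ℂ) *
        (star h ⬝ᵥ ((A + ((ρ * (1 - εu) * εv * ξ ^ 2 : ℝ) : ℂ) •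
          vecMulVec h (star h))⁻¹ *ᵥ h))
      = (((ρ * εu * εv * ξ ^ 2 : ℝ) : ℂ) * (star h ⬝ᵥ (A⁻¹ *ᵥ h))) /
        (1 + ((ρ * (1 - εu) * εv * ξ ^ 2 : ℝ) : ℂ) * (star h ⬝ᵥ (A⁻¹ *ᵥ h)))) ∧
    (εu < 1 →
      (((ρ * εu * εv * ξ ^ 2 : ℝ) : ℂ) *
          (star h ⬝ᵥ ((A + ((ρ * (1 - εu) * εv * ξ ^ 2 : ℝ) : ℂ) •
            vecMulVec h (star h))⁻¹ *ᵥ h))).re < εu / (1 - εu)) := by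
  set k : ℝ := ρ * εu * εv * ξ ^ 2
  set c : ℝ := ρ * (1 - εu) * εv * ξ ^ 2
  have hc : 0 ≤ c := by have := sub_nonneg.2 hεu1; positivity
  obtain ⟨t, ht, hst⟩ : ∃ t : ℝ, 0 ≤ t ∧ star h ⬝ᵥ (A⁻¹ *ᵥ h) = t := by
    have hs := Complex.nonneg_iff.1 (hA.inv.posSemidef.dotProduct_mulVec_nonneg h)
    exact ⟨_, hs.1, Complex.ext rfl hs.2.symm⟩
  have hd : 1 + (c : ℂ) * (star h ⬝ᵥ A⁻¹ *ᵥ h) ≠ 0 := by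
    rw [hst]; exact_mod_cast (by positivity : 1 + c * t ≠ 0)
  have hγ : (k : ℂ) * (star h ⬝ᵥ (A + (c : ℂ) • vecMulVec h (star h))⁻¹ *ᵥ h) =
      k * (star h ⬝ᵥ A⁻¹ *ᵥ h) / (1 + c * (star h ⬝ᵥ A⁻¹ *ᵥ h)) := by
    rw [inv_add_smul_vecMulVec_mulVec (A.isUnit_iff_isUnit_det.1 hA.isUnit) _ _ _ hd,
      dotProduct_smul, smul_eq_mul, div_eq_mul_inv]
    ring
  refine ⟨hγ, fun hεu_lt => ?_⟩
  have h1εu : 0 < 1 - εu := sub_pos.2 hεu_lt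
  rw [hγ, hst]
  norm_cast
  calc k * t / (1 + c * t) < k / c := mul_div_one_add_mul_lt_div (by positivity) (by positivity) ht
    _ = εu / (1 - εu) := by simp only [k, c]; field_simp
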